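/- Let C ⊆ {0,1}^n be a distance preserving concept class and c ∈ C. Then deg_C(c), the set of coordinates x such that c is incident to an x-edge in the one-inclusion graph of C, is a teaching set for c: for every c' ∈ C with c' ≠ c there exists x ∈ deg_C(c) with c(x) ≠ c'(x). -/

import Mathlib

variable {n : ℕ}

/-- `S` is shattered by the concept class `C`. -/
def Shatters (C : Set (Fin n → Bool)) (S : Finset (Fin n)) : Prop :=
  ∀ f : Fin n → Bool, ∃ c ∈ C, ∀ x ∈ S, c x = f x

/-- `B` is a cube of `C` with dimension set `S`. -/
def IsCube (C B : Set (Fin n → Bool)) (S : Finset (Fin n)) : Prop :=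
  B ⊆ C ∧ (∀ b ∈ B, ∀ b' ∈ B, ∀ x, x ∉ S → b x = b' x) ∧
    (∀ f : Fin n → Bool, ∃ b ∈ B, ∀ x ∈ S, b x = f x)

/-- `S` is strongly shattered by `C`. -/
def StronglyShatters (C : Set (Fin n → Bool)) (S : Finset (Fin n)) : Prop :=
  ∃ B, IsCube C B S

/-- `C` is extremal: every shattered set is strongly shattered. -/
def Extremal (C : Set (Fin n → Bool)) : Prop :=
  ∀ S, Shatters C S → StronglyShatters C S

/-- The one-inclusion graph of `C`: vertices are the concepts of `C`, edges
connect concepts at Hamming distance 1. -/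
def oneInclusionGraph (C : Set (Fin n → Bool)) : SimpleGraph C where
  Adj u v := hammingDist u.1 v.1 = 1
  symm := ⟨by intro u v h; rwa [hammingDist_comm]⟩
  loopless := ⟨by intro u h; simp [hammingDist_self] at h⟩

/-!
The first edge of a shortest path from `c` to `c'` in the one-inclusion graph flips one
coordinate `x` of `c` and, the graph metric being the Hamming metric, brings us strictly closer
to `c'` in Hamming distance. Flipping a coordinate on which `c` and `c'` agree would instead
increase the Hamming distance to `c'` by one, so `c x ≠ c' x`.
-/

namespace SimpleGraph

theorem exists_adj_dist_lt_of_dist_ne_zero {V : Type*} {G : SimpleGraph V} {v w : V}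
    (h : G.dist v w ≠ 0) : ∃ u, G.Adj v u ∧ G.dist u w < G.dist v w := by
  obtain ⟨p, hp⟩ := G.exists_walk_of_dist_ne_zero h
  cases p with
  | nil => exact absurd dist_self h
  | cons hadj q =>
    refine ⟨_, hadj, ?_⟩
    have := dist_le q
    rw [Walk.length_cons] at hp
    omega

end SimpleGraph

section Hamming

variable {ι : Type*} [Fintype ι] [DecidableEq ι] {β : ι → Type*} [∀ i, DecidableEq (β i)]

theorem exists_eq_update_of_hammingDist_eq_one {a b : ∀ i, β i} (h : hammingDist a b = 1) :
    ∃ x, b x ≠ a x ∧ b = Function.update a x (b x) := by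
  obtain ⟨x, hx⟩ := Finset.card_eq_one.mp h
  have hdiff : ∀ y, a y ≠ b y ↔ y = x := fun y => by
    simpa using Finset.ext_iff.mp hx y
  refine ⟨x, Ne.symm ((hdiff x).2 rfl), funext fun y => ?_⟩
  rcases eq_or_ne y x with rfl | hy
  · simp
  · rw [Function.update_of_ne hy]
    exact (not_not.mp (mt (hdiff y).1 hy)).symm

theorem hammingDist_update_of_eq {a b : ∀ i, β i} {x : ι} {v : β x} (hab : a x = b x)
    (hv : v ≠ a x) : hammingDist (Function.update a x v) b = hammingDist a b + 1 := by
  have hx : x ∉ ({i | a i ≠ b i} : Finset ι) := by simpa using hab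
  rw [hammingDist, hammingDist, ← Finset.card_insert_of_notMem hx]
  congr 1
  ext y
  rcases eq_or_ne y x with rfl | hy
  · simpa [← hab] using hv
  · simp [hy]

end Hamming

/-- For a distance preserving class `C`, the set of coordinates `x` such that
`c` is incident to an `x`-edge is a teaching set for `c` with respect to `C`. -/
theorem deg_is_teaching_set (n : ℕ) (C : Set (Fin n → Bool))
    (hDP : ∀ u v : C, (oneInclusionGraph C).dist u v = hammingDist u.1 v.1) :
    ∀ c ∈ C, ∀ c' ∈ C, c' ≠ c →
      ∃ x : Fin n, Function.update c x (!(c x)) ∈ C ∧ c x ≠ c' x := by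
  intro c hc c' hc' hne
  have hdist : (oneInclusionGraph C).dist ⟨c, hc⟩ ⟨c', hc'⟩ ≠ 0 := by
    rw [hDP, hammingDist_ne_zero]
    exact hne.symm
  obtain ⟨u, hadj, hcloser⟩ := SimpleGraph.exists_adj_dist_lt_of_dist_ne_zero hdist
  obtain ⟨x, hux, hu⟩ :=
    exists_eq_update_of_hammingDist_eq_one (show hammingDist c u.1 = 1 from hadj)
  rw [Bool.eq_not_iff.mpr hux] at hu
  refine ⟨x, hu ▸ u.2, fun hcx => ?_⟩
  replace hcloser : hammingDist u.1 c' < hammingDist c c' := by simpa only [hDP] using hcloser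
  rw [hu, hammingDist_update_of_eq hcx (Bool.not_ne_self _)] at hcloser
  omega
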